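/- arXiv:1712.09136 — 5 statements merged into one kernel-verified Lean document; each statement's English description precedes it below -/
import Mathlib

section
/- Suppose ε ≥ 0, δ > 1, and p, q, p₀, q₀ are positive reals with e^{−ε} ≤ p₀/q₀ ≤ e^{ε}, and with p ≤ γ·q and p ≥ γ^{−1}·q where γ = max(δ, p₀/q₀, q₀/p₀). Then, setting ε' = max(ε, log δ), we have e^{−ε'} ≤ p/q ≤ e^{ε'}. -/
/-!
The stability constant `γ = max (δ, p₀/q₀, q₀/p₀)` is at most `e^{ε'}`: `δ = e^{log δ}`, and the
two-sided ε-bound on `p₀/q₀` also bounds its reciprocal `q₀/p₀`. So the stability bounds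
`γ⁻¹ q ≤ p ≤ γ q` already place `p/q` in `[e^{-ε'}, e^{ε'}]`.
-/

open Real

lemma inv_le_exp_of_exp_neg_le {r ε : ℝ} (h : exp (-ε) ≤ r) : r⁻¹ ≤ exp ε :=
  inv_le_of_inv_le₀ (exp_pos ε) (by rwa [← exp_neg])

lemma exp_neg_le_div_and_div_le_exp_of_le_mul {p q γ ε : ℝ} (hq : 0 < q) (hγ : 0 < γ)
    (hγε : γ ≤ exp ε) (hup : p ≤ γ * q) (hdn : γ⁻¹ * q ≤ p) :
    exp (-ε) ≤ p / q ∧ p / q ≤ exp ε := by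
  constructor
  · calc exp (-ε) = (exp ε)⁻¹ := exp_neg ε
      _ ≤ γ⁻¹ := inv_anti₀ hγ hγε
      _ ≤ p / q := (le_div_iff₀ hq).mpr hdn
  · calc p / q ≤ γ := (div_le_iff₀ hq).mpr hup
      _ ≤ exp ε := hγε

theorem stmt4_general (ε δ p q p₀ q₀ : ℝ)
    (hq : 0 < q)
    (hlo : Real.exp (-ε) ≤ p₀ / q₀) (hhi : p₀ / q₀ ≤ Real.exp ε)
    (hup : p ≤ max δ (max (p₀ / q₀) (q₀ / p₀)) * q)
    (hdn : p ≥ (max δ (max (p₀ / q₀) (q₀ / p₀)))⁻¹ * q) :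
    Real.exp (-(max ε (Real.log δ))) ≤ p / q ∧ p / q ≤ Real.exp (max ε (Real.log δ)) := by
  have hε_le : exp ε ≤ exp (max ε (log δ)) := exp_le_exp.mpr (le_max_left _ _)
  have hγ_pos : 0 < max δ (max (p₀ / q₀) (q₀ / p₀)) :=
    (exp_pos (-ε)).trans_le (hlo.trans ((le_max_left _ _).trans (le_max_right _ _)))
  have hγ_le : max δ (max (p₀ / q₀) (q₀ / p₀)) ≤ exp (max ε (log δ)) := by
    refine max_le ((le_exp_log δ).trans (exp_le_exp.mpr (le_max_right _ _))) (max_le ?_ ?_)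
    · exact hhi.trans hε_le
    · rw [← inv_div]
      exact (inv_le_exp_of_exp_neg_le hlo).trans hε_le
  exact exp_neg_le_div_and_div_le_exp_of_le_mul hq hγ_pos hγ_le hup hdn

theorem stmt4 (ε δ p q p₀ q₀ : ℝ) (hε : 0 ≤ ε) (hδ : 1 < δ)
    (hp : 0 < p) (hq : 0 < q) (hp₀ : 0 < p₀) (hq₀ : 0 < q₀)
    (hlo : Real.exp (-ε) ≤ p₀ / q₀) (hhi : p₀ / q₀ ≤ Real.exp ε)
    (hup : p ≤ max δ (max (p₀ / q₀) (q₀ / p₀)) * q)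
    (hdn : p ≥ (max δ (max (p₀ / q₀) (q₀ / p₀)))⁻¹ * q) :
    Real.exp (-(max ε (Real.log δ))) ≤ p / q ∧ p / q ≤ Real.exp (max ε (Real.log δ)) :=
  stmt4_general ε δ p q p₀ q₀ hq hlo hhi hup hdn
end

section
/- Let m ≥ 1 and n > 1 be natural numbers, let y-counts n_y ≥ 2 for the target label, and let a_1,…,a_m with 2 ≤ a_i ≤ n_y. Then the product ∏_{i=1}^m [a_i(n_y−1)/(n_y(a_i−1))] · [n_y(n−1)/(n(n_y−1))] ≥ 1, where all divisions are real. -/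
/-! Both kinds of factor have the form `x (y - 1) / (y (x - 1))` with `1 < x ≤ y`, and such a
ratio is at least `1` because `t ↦ t / (t - 1)` is decreasing on `(1, ∞)`: cross-multiplied,
`y (x - 1) ≤ x (y - 1)` is just `x ≤ y`. -/

theorem one_le_mul_sub_one_div_mul_sub_one {K : Type*} [Field K] [LinearOrder K]
    [IsStrictOrderedRing K] {x y : K} (hx : 1 < x) (hxy : x ≤ y) :
    1 ≤ x * (y - 1) / (y * (x - 1)) := by
  have hden : 0 < y * (x - 1) := mul_pos (by linarith) (by linarith)
  have hdiff : x * (y - 1) - y * (x - 1) = y - x := by ring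
  rw [one_le_div hden]
  linarith

theorem stmt8_general (m n ny : ℕ) (hny : 2 ≤ ny) (hnyn : ny ≤ n)
    (a : Fin m → ℕ) (ha : ∀ i, 2 ≤ a i) (ha' : ∀ i, a i ≤ ny) :
    (∏ i, ((a i : ℝ) * ((ny : ℝ) - 1)) / ((ny : ℝ) * ((a i : ℝ) - 1))) *
      (((ny : ℝ) * ((n : ℝ) - 1)) / ((n : ℝ) * ((ny : ℝ) - 1))) ≥ 1 := by
  have hlabel : 1 ≤ ((ny : ℝ) * ((n : ℝ) - 1)) / ((n : ℝ) * ((ny : ℝ) - 1)) :=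
    one_le_mul_sub_one_div_mul_sub_one (by exact_mod_cast hny) (by exact_mod_cast hnyn)
  have hfeatures : 1 ≤ ∏ i, ((a i : ℝ) * ((ny : ℝ) - 1)) / ((ny : ℝ) * ((a i : ℝ) - 1)) :=
    Finset.one_le_prod fun i _ ↦
      one_le_mul_sub_one_div_mul_sub_one (by exact_mod_cast ha i) (by exact_mod_cast ha' i)
  exact one_le_mul_of_one_le_of_one_le hfeatures hlabel

theorem stmt8 (m n ny : ℕ) (hm : 1 ≤ m) (hn : 1 < n) (hny : 2 ≤ ny) (hnyn : ny ≤ n)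
    (a : Fin m → ℕ) (ha : ∀ i, 2 ≤ a i) (ha' : ∀ i, a i ≤ ny) :
    (∏ i, ((a i : ℝ) * ((ny : ℝ) - 1)) / ((ny : ℝ) * ((a i : ℝ) - 1))) *
      (((ny : ℝ) * ((n : ℝ) - 1)) / ((n : ℝ) * ((ny : ℝ) - 1))) ≥ 1 :=
  stmt8_general m n ny hny hnyn a ha ha'
end

section
/- Let m ≥ 1, n ≥ 2 be natural numbers and n_min ≥ 2. Then for any natural number n_y with n_min ≤ n_y ≤ n, we have ((n_y − 1)/n_y)^m · (n_y/(n_y − 1)) · ((n−1)/n) ≥ [ (n_min/(n_min − 1))^{m−1} · (n/(n−1)) ]^{−1}, where all divisions are real. -/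
/-! The factor `n_y / (n_y - 1)` cancels one power of `(n_y - 1) / n_y`, the factor `(n - 1) / n`
appears on both sides, and `x ↦ (x - 1) / x` is increasing, so `n_min ≤ n_y` finishes. -/

theorem sub_one_div_self_le_sub_one_div_self {K : Type*} [Field K] [LinearOrder K]
    [IsStrictOrderedRing K] {a b : K} (ha : 0 < a) (hab : a ≤ b) :
    (a - 1) / a ≤ (b - 1) / b := by
  rw [sub_div, sub_div, div_self ha.ne', div_self (ha.trans_le hab).ne']
  gcongr

theorem sub_one_div_self_nonneg {K : Type*} [Field K] [LinearOrder K]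
    [IsStrictOrderedRing K] {a : K} (ha : 1 ≤ a) : 0 ≤ (a - 1) / a :=
  div_nonneg (sub_nonneg.2 ha) (zero_le_one.trans ha)

theorem stmt9_general (m n nmin ny : ℕ) (hm : 1 ≤ m) (hn : 2 ≤ n) (hnmin : 2 ≤ nmin)
    (h1 : nmin ≤ ny) :
    (((ny : ℝ) - 1) / (ny : ℝ)) ^ m * ((ny : ℝ) / ((ny : ℝ) - 1)) * (((n : ℝ) - 1) / (n : ℝ)) ≥
      (((nmin : ℝ) / ((nmin : ℝ) - 1)) ^ (m - 1) * ((n : ℝ) / ((n : ℝ) - 1)))⁻¹ := by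
  obtain ⟨k, rfl⟩ := Nat.exists_eq_add_of_le' hm
  have hnR : (1 : ℝ) ≤ n := by exact_mod_cast one_le_two.trans hn
  have hnminR : (1 : ℝ) ≤ nmin := by exact_mod_cast one_le_two.trans hnmin
  have hnyR : (1 : ℝ) < ny := by exact_mod_cast one_lt_two.trans_le (hnmin.trans h1)
  have hq : ((ny : ℝ) - 1) / ny ≠ 0 := div_ne_zero (sub_ne_zero.2 hnyR.ne') (by positivity)
  rw [Nat.add_sub_cancel, mul_inv, ← inv_pow, inv_div, inv_div, ← inv_div ((ny : ℝ) - 1),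
    pow_succ, mul_inv_cancel_right₀ hq]
  have hc := sub_one_div_self_nonneg hnR
  have hp := sub_one_div_self_nonneg hnminR
  gcongr ?_ ^ k * _
  exact sub_one_div_self_le_sub_one_div_self (by positivity) (by exact_mod_cast h1)

theorem stmt9 (m n nmin ny : ℕ) (hm : 1 ≤ m) (hn : 2 ≤ n) (hnmin : 2 ≤ nmin)
    (h1 : nmin ≤ ny) (h2 : ny ≤ n) :
    (((ny : ℝ) - 1) / (ny : ℝ)) ^ m * ((ny : ℝ) / ((ny : ℝ) - 1)) * (((n : ℝ) - 1) / (n : ℝ)) ≥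
      (((nmin : ℝ) / ((nmin : ℝ) - 1)) ^ (m - 1) * ((n : ℝ) / ((n : ℝ) - 1)))⁻¹ :=
  stmt9_general m n nmin ny hm hn hnmin h1
end

section
/- There exists a classification algorithm A (a map from finite datasets to classifiers returning probabilities) and a dataset T with a record t ∈ T such that the predictions of A(T) and A(T∖{t}) agree exactly on the query x^(t) (so the PDTP of t is 0), yet there exists another query x ≠ x^(t) on which the predictions of A(T) and A(T∖{t}) differ maximally (probability 1 versus 0). In particular, PDTP does not upper-bound DTP for arbitrary classifiers. -/
/-!
The classifier `membershipProbe x₀ t` answers deterministically everywhere. Away from the probe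
point `x₀` its answer ignores the training set, so as long as the record `t` does not sit at `x₀`,
removing `t` leaves the prediction on `t`'s own query unchanged and its PDTP is `0`. At `x₀` the
predicted label is the membership bit `t ∈ S`, so querying `x₀` recovers that bit with certainty.
-/

section MembershipProbe

variable {X : Type*} [DecidableEq X]

def membershipProbe (x₀ : X) (t : X × Bool) (S : Finset (X × Bool)) (x : X) : Bool → ℝ :=
  Pi.single (decide (x = x₀ ∧ t ∈ S)) 1

variable (x₀ : X) (t : X × Bool) (S : Finset (X × Bool))

lemma membershipProbe_nonneg (x : X) (y : Bool) : 0 ≤ membershipProbe x₀ t S x y :=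
  (Pi.single_nonneg (α := fun _ : Bool => ℝ)).mpr zero_le_one y

lemma sum_membershipProbe (x : X) : ∑ y, membershipProbe x₀ t S x y = 1 :=
  Fintype.sum_pi_single' _ _

lemma membershipProbe_of_ne {x : X} (hx : x ≠ x₀) (S' : Finset (X × Bool)) :
    membershipProbe x₀ t S x = membershipProbe x₀ t S' x := by
  simp only [membershipProbe, hx, false_and]

lemma membershipProbe_self_true :
    membershipProbe x₀ t S x₀ true = if t ∈ S then 1 else 0 := by
  by_cases ht : t ∈ S <;> simp [membershipProbe, ht]

end MembershipProbe

theorem stmt11 :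
    ∃ (A : Finset (ℝ × Bool) → ℝ → Bool → ℝ),
      (∀ (S : Finset (ℝ × Bool)) (x : ℝ),
        (∀ y, 0 ≤ A S x y) ∧ (∑ y : Bool, A S x y) = 1) ∧
      ∃ (T : Finset (ℝ × Bool)) (t : ℝ × Bool), t ∈ T ∧
        (∀ y, A T t.1 y = A (T.erase t) t.1 y) ∧
        ∃ (x : ℝ) (y : Bool), x ≠ t.1 ∧ A T x y = 1 ∧ A (T.erase t) x y = 0 := by
  set t : ℝ × Bool := (1, true)
  have ht : t.1 ≠ 0 := one_ne_zero
  refine ⟨membershipProbe 0 t,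
    fun S x => ⟨membershipProbe_nonneg 0 t S x, sum_membershipProbe 0 t S x⟩,
    {t}, t, Finset.mem_singleton_self t,
    fun y => congrFun (membershipProbe_of_ne 0 t {t} ht _) y,
    0, true, ht.symm, ?_, ?_⟩
  all_goals simp [membershipProbe_self_true]
end

section
/- The 1-nearest-neighbor classification algorithm is not δ-training stable for any δ > 1: there exist a finite training set T ⊆ ℝ × Y (with |Y| = 2), a record t ∈ T, and a query point x' such that p_{A(T)}(y^(t)|x^(t)) = p_{A(T∖{t})}(y^(t)|x^(t)) = 1 (ratio 1 on the target's own query) while p_{A(T)}(y'|x') = 1 and p_{A(T∖{t})}(y'|x') = 0 for some label y'. -/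
/-!
Removing a training point can flip a far-away prediction while leaving the point's own
prediction intact: on `T = {(1, A), (0, A), (4, B)}` the query `5/2` has nearest neighbor
`(1, A)`, but once `(1, A)` is removed its nearest neighbor is `(4, B)`, whereas `1` itself
is still closest to `(0, A)`. The query `2` would not do: after the removal `0` and `4` tie,
and `nnPred` counts every weakly closest point, so both labels would get probability `1`.
-/

/-- The 1-nearest-neighbor prediction: probability `1` for label `y` on query `x`
if some point of `T` with label `y` is (weakly) closest to `x`, else `0`. -/
noncomputable def nnPred (T : Finset (ℝ × Bool)) (x : ℝ) (y : Bool) : ℝ :=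
  open Classical in
  if ∃ z ∈ T, z.2 = y ∧ ∀ w ∈ T, |x - z.1| ≤ |x - w.1| then 1 else 0

section NearestNeighbor

variable {T : Finset (ℝ × Bool)} {x : ℝ} {y : Bool}

theorem nnPred_eq_one_of_isNearest (z : ℝ × Bool) (hz : z ∈ T) (hzy : z.2 = y)
    (hnear : ∀ w ∈ T, |x - z.1| ≤ |x - w.1|) : nnPred T x y = 1 :=
  if_pos ⟨z, hz, hzy, hnear⟩

theorem nnPred_self {t : ℝ × Bool} (ht : t ∈ T) : nnPred T t.1 t.2 = 1 :=
  nnPred_eq_one_of_isNearest t ht rfl fun w _ => by simp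

theorem nnPred_eq_zero_of_forall_closer
    (hcloser : ∀ z ∈ T, z.2 = y → ∃ w ∈ T, |x - w.1| < |x - z.1|) : nnPred T x y = 0 := by
  refine if_neg ?_
  rintro ⟨z, hz, hzy, hnear⟩
  obtain ⟨w, hw, hlt⟩ := hcloser z hz hzy
  exact (hnear w hw).not_gt hlt

end NearestNeighbor

theorem stmt12 :
    ∃ (T : Finset (ℝ × Bool)) (t : ℝ × Bool) (x' : ℝ) (y' : Bool), t ∈ T ∧
      nnPred T t.1 t.2 = 1 ∧ nnPred (T.erase t) t.1 t.2 = 1 ∧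
      nnPred T x' y' = 1 ∧ nnPred (T.erase t) x' y' = 0 := by
  have hnotin : ((1 : ℝ), false) ∉ ({(0, false), (4, true)} : Finset (ℝ × Bool)) := by
    norm_num
  refine ⟨insert (1, false) {(0, false), (4, true)}, (1, false), 5 / 2, false,
    Finset.mem_insert_self _ _, nnPred_self (Finset.mem_insert_self _ _), ?_, ?_, ?_⟩
  · rw [Finset.erase_insert hnotin]
    exact nnPred_eq_one_of_isNearest (0, false) (by simp) rfl (by norm_num [abs_of_nonneg])
  · exact nnPred_eq_one_of_isNearest (1, false) (by simp) rfl (by norm_num [abs_of_nonneg])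
  · rw [Finset.erase_insert hnotin]
    refine nnPred_eq_zero_of_forall_closer ?_
    norm_num [abs_of_nonneg]
end
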